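/- Let G be a profinite group that is the inverse limit of its finite quotients G/H_n, where H_n is a decreasing sequence of open normal subgroups with trivial intersection. Suppose a closed subgroup Γ of GL_d(ℤ_p) acts continuously on ℤ_p^d and, for some fixed N and all n > N and every z in U = ℤ_p^d ∖ pℤ_p^d, the image of (z + p^n ℤ_p^d) ∩ (Γ·z) in ℤ_p^d / p^{n+1}ℤ_p^d equals the image of z + p^n ℤ_p^d, and moreover both sets have exactly p^d elements. Then every Γ-orbit in U is open in U. -/

import Mathlib

/-!
The hypothesis says that a point `y` congruent to an orbit point `x` modulo `p^m` (with `m > N`)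
is congruent modulo `p^(m+1)` to some other orbit point. Iterating from `m = N + 1` gives orbit
points converging `p`-adically to `y`. Since `Γ` is compact, its orbits are closed, so every orbit
contains the full congruence class modulo `p^(N+1)` of each of its points, hence is open.
-/

open Matrix

/-- The orbit of `z ∈ ℤ_p^d` under a subgroup `Γ ≤ GL_d(ℤ_p)` (acting by matrix
multiplication). -/
def glOrbit (p : ℕ) [Fact p.Prime] (d : ℕ)
    (Γ : Subgroup (GL (Fin d) ℤ_[p])) (z : Fin d → ℤ_[p]) : Set (Fin d → ℤ_[p]) :=
  {x | ∃ g ∈ Γ, x = Matrix.mulVec ((g : GL (Fin d) ℤ_[p]) : Matrix (Fin d) (Fin d) ℤ_[p]) z}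

open Topology

instance Matrix.compactSpace {m n R : Type*} [TopologicalSpace R] [CompactSpace R] :
    CompactSpace (Matrix m n R) :=
  inferInstanceAs (CompactSpace (m → n → R))

theorem Matrix.dvd_mulVec_apply {m n R : Type*} [Fintype n] [CommSemiring R] {a : R}
    {v : n → R} (hv : ∀ j, a ∣ v j) (M : Matrix m n R) (i : m) : a ∣ (M *ᵥ v) i :=
  Finset.dvd_sum fun j _ => dvd_mul_of_dvd_right (hv j) _

namespace PadicInt

variable {p : ℕ} [Fact p.Prime] {ι : Type*}

theorem exists_dvd_sub_succ_of_image_eq {S : Set (ι → ℤ_[p])} {x y : ι → ℤ_[p]} {m : ℕ}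
    (hS : (fun x : ι → ℤ_[p] => fun i => toZModPow (m + 1) (x i)) ''
        ({w | ∃ u : ι → ℤ_[p], w = x + (p : ℤ_[p]) ^ m • u} ∩ S) =
      (fun x : ι → ℤ_[p] => fun i => toZModPow (m + 1) (x i)) ''
        {w | ∃ u : ι → ℤ_[p], w = x + (p : ℤ_[p]) ^ m • u})
    (hy : ∀ i, (p : ℤ_[p]) ^ m ∣ y i - x i) :
    ∃ w ∈ S, ∀ i, (p : ℤ_[p]) ^ (m + 1) ∣ y i - w i := by
  choose u hu using hy
  have hy' : y ∈ {w | ∃ u : ι → ℤ_[p], w = x + (p : ℤ_[p]) ^ m • u} :=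
    ⟨u, funext fun i => by simp [← hu i]⟩
  obtain ⟨w, ⟨-, hw⟩, hyw⟩ := hS ▸ Set.mem_image_of_mem _ hy'
  refine ⟨w, hw, fun i => ?_⟩
  rw [← Ideal.mem_span_singleton, ← ker_toZModPow, RingHom.mem_ker, map_sub, sub_eq_zero]
  exact (congrFun hyw i).symm

variable [Fintype ι]

theorem pi_norm_le_inv_pow_iff (v : ι → ℤ_[p]) (n : ℕ) :
    ‖v‖ ≤ (p : ℝ)⁻¹ ^ n ↔ ∀ i, (p : ℤ_[p]) ^ n ∣ v i := by
  rw [pi_norm_le_iff_of_nonneg (by positivity), inv_pow, ← zpow_natCast, ← _root_.zpow_neg]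
  simp only [norm_le_pow_iff_mem_span_pow, Ideal.mem_span_singleton]

theorem nhds_basis_pi_dvd_sub (x : ι → ℤ_[p]) :
    (𝓝 x).HasBasis (fun _ => True) fun n : ℕ => {y | ∀ i, (p : ℤ_[p]) ^ n ∣ y i - x i} := by
  have hp : (1 : ℝ) < p := mod_cast (Fact.out : p.Prime).one_lt
  convert Metric.nhds_basis_closedBall_pow (x := x) (inv_pos.2 (by positivity))
    (inv_lt_one_of_one_lt₀ hp) using 2 with n
  ext y
  rw [Metric.mem_closedBall, dist_eq_norm, pi_norm_le_inv_pow_iff]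
  rfl

theorem isOpen_of_forall_dvd_sub_mem {S : Set (ι → ℤ_[p])} (n : ℕ)
    (h : ∀ x ∈ S, ∀ y : ι → ℤ_[p], (∀ i, (p : ℤ_[p]) ^ n ∣ y i - x i) → y ∈ S) : IsOpen S :=
  isOpen_iff_mem_nhds.2 fun x hx =>
    (nhds_basis_pi_dvd_sub x).mem_iff.2 ⟨n, trivial, fun y hy => h x hx y hy⟩

theorem mem_of_isClosed_of_lift {S : Set (ι → ℤ_[p])} (hS : IsClosed S) {N : ℕ}
    (hlift : ∀ m, N < m → ∀ x ∈ S, ∀ y : ι → ℤ_[p], (∀ i, (p : ℤ_[p]) ^ m ∣ y i - x i) →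
      ∃ w ∈ S, ∀ i, (p : ℤ_[p]) ^ (m + 1) ∣ y i - w i)
    {x y : ι → ℤ_[p]} (hx : x ∈ S) (hy : ∀ i, (p : ℤ_[p]) ^ (N + 1) ∣ y i - x i) : y ∈ S := by
  have approx : ∀ k, ∃ w ∈ S, ∀ i, (p : ℤ_[p]) ^ (N + 1 + k) ∣ y i - w i := by
    intro k
    induction k with
    | zero => exact ⟨x, hx, hy⟩
    | succ k ih =>
      obtain ⟨w, hw, hyw⟩ := ih
      exact hlift (N + 1 + k) (by omega) w hw y hyw
  rw [← hS.closure_eq, mem_closure_iff_nhds_basis (nhds_basis_pi_dvd_sub y)]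
  intro k _
  obtain ⟨w, hw, hyw⟩ := approx k
  exact ⟨w, hw, fun i => dvd_sub_comm.1 ((pow_dvd_pow _ (by omega)).trans (hyw i))⟩

end PadicInt

section glOrbit

variable {p : ℕ} [Fact p.Prime] {d : ℕ} {Γ : Subgroup (GL (Fin d) ℤ_[p])}

theorem glOrbit_eq_of_mem {z x : Fin d → ℤ_[p]} (hx : x ∈ glOrbit p d Γ z) :
    glOrbit p d Γ x = glOrbit p d Γ z := by
  obtain ⟨g, hg, rfl⟩ := hx
  ext w
  constructor
  · rintro ⟨h, hh, rfl⟩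
    exact ⟨h * g, mul_mem hh hg, by rw [Units.val_mul, ← mulVec_mulVec]⟩
  · rintro ⟨h, hh, rfl⟩
    refine ⟨h * g⁻¹, mul_mem hh (inv_mem hg), ?_⟩
    rw [mulVec_mulVec, ← Units.val_mul, mul_assoc, inv_mul_cancel, mul_one]

theorem exists_not_dvd_of_mem_glOrbit {z x : Fin d → ℤ_[p]} (hz : ∃ i, ¬ (p : ℤ_[p]) ∣ z i)
    (hx : x ∈ glOrbit p d Γ z) : ∃ i, ¬ (p : ℤ_[p]) ∣ x i := by
  obtain ⟨g, -, rfl⟩ := hx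
  by_contra! h
  obtain ⟨i, hi⟩ := hz
  have hz : z = (↑g⁻¹ : Matrix (Fin d) (Fin d) ℤ_[p]) *ᵥ (↑g *ᵥ z) := by
    rw [mulVec_mulVec, ← Units.val_mul, inv_mul_cancel, Units.val_one, one_mulVec]
  exact hi (hz ▸ dvd_mulVec_apply h _ i)

theorem isClosed_glOrbit (hΓ : IsClosed (Γ : Set (GL (Fin d) ℤ_[p]))) (z : Fin d → ℤ_[p]) :
    IsClosed (glOrbit p d Γ z) := by
  have hcont : Continuous fun g : GL (Fin d) ℤ_[p] => (g : Matrix (Fin d) (Fin d) ℤ_[p]) *ᵥ z :=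
    Units.continuous_val.matrix_mulVec continuous_const
  have himage : glOrbit p d Γ z = (fun g : GL (Fin d) ℤ_[p] => (g : Matrix _ _ _) *ᵥ z) '' Γ := by
    ext x
    simp [glOrbit, eq_comm]
  rw [himage]
  exact (hΓ.isCompact.image hcont).isClosed

end glOrbit

/-- Let `Γ` be a closed subgroup of `GL_d(ℤ_p)` acting on `ℤ_p^d`,
and `U = ℤ_p^d ∖ pℤ_p^d`.  Suppose that for some `N` and all `n > N` and all `z ∈ U`,
the image of `(z + pⁿℤ_p^d) ∩ Γ·z` in `ℤ_p^d/p^{n+1}ℤ_p^d` equals the image of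
`z + pⁿℤ_p^d`, and both images have exactly `p^d` elements.  Then every `Γ`-orbit in
`U` is open in `U`. -/
theorem stmt11 (p : ℕ) [Fact p.Prime] (d : ℕ)
    (Γ : Subgroup (GL (Fin d) ℤ_[p]))
    (hΓ : IsClosed (Γ : Set (GL (Fin d) ℤ_[p])))
    (U : Set (Fin d → ℤ_[p]))
    (hU : U = {x : Fin d → ℤ_[p] | ∃ i, ¬ (p : ℤ_[p]) ∣ x i})
    (N : ℕ)
    (hmain : ∀ n : ℕ, N < n → ∀ z ∈ U,
      (fun x : Fin d → ℤ_[p] => fun i => PadicInt.toZModPow (n + 1) (x i)) ''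
          ({w | ∃ u : Fin d → ℤ_[p], w = z + (p : ℤ_[p]) ^ n • u} ∩ glOrbit p d Γ z) =
        (fun x : Fin d → ℤ_[p] => fun i => PadicInt.toZModPow (n + 1) (x i)) ''
          {w | ∃ u : Fin d → ℤ_[p], w = z + (p : ℤ_[p]) ^ n • u} ∧
      Nat.card ((fun x : Fin d → ℤ_[p] => fun i => PadicInt.toZModPow (n + 1) (x i)) ''
          ({w | ∃ u : Fin d → ℤ_[p], w = z + (p : ℤ_[p]) ^ n • u} ∩ glOrbit p d Γ z)) =
        p ^ d ∧
      Nat.card ((fun x : Fin d → ℤ_[p] => fun i => PadicInt.toZModPow (n + 1) (x i)) ''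
          {w | ∃ u : Fin d → ℤ_[p], w = z + (p : ℤ_[p]) ^ n • u}) = p ^ d) :
    ∀ z ∈ U, IsOpen (Subtype.val ⁻¹' glOrbit p d Γ z : Set U) := by
  subst hU
  intro z hz
  have hlift : ∀ m, N < m → ∀ x ∈ glOrbit p d Γ z, ∀ y : Fin d → ℤ_[p],
      (∀ i, (p : ℤ_[p]) ^ m ∣ y i - x i) → ∃ w ∈ glOrbit p d Γ z, ∀ i, (p : ℤ_[p]) ^ (m + 1) ∣ y i - w i := by
    intro m hm x hx y hy
    rw [← glOrbit_eq_of_mem hx]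
    exact PadicInt.exists_dvd_sub_succ_of_image_eq
      (hmain m hm x (exists_not_dvd_of_mem_glOrbit hz hx)).1 hy
  have hopen : IsOpen (glOrbit p d Γ z) :=
    PadicInt.isOpen_of_forall_dvd_sub_mem (N + 1) fun x hx y hy =>
      PadicInt.mem_of_isClosed_of_lift (isClosed_glOrbit hΓ z) hlift hx hy
  exact hopen.preimage continuous_subtype_val
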